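/- Let a, b > 0, let k, ℓ be integers ≥ 1, and multi-indices α, β. Then |∂_x^β ∂_ξ^α (b|x|^(2k) + a|ξ|^(2ℓ))| ≤ C_{αβ} max{a,b,1} (1 + b|x|^(2k) + a|ξ|^(2ℓ))^(1 − |β|/(2k) − |α|/(2ℓ)) for all x, ξ ∈ ℝⁿ, where C_{αβ} depends only on α, β, k, ℓ, n (not on a, b). -/

import Mathlib

/-!
Each summand of `b|x|^{2k} + a|ξ|^{2ℓ}` depends on one block of variables only, so
`∂_x^β ∂_ξ^α` annihilates `b|x|^{2k}` unless `α = 0`, and `a|ξ|^{2ℓ}` unless `β = 0`.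
The polynomial `∂_x^β |x|^{2k}` is homogeneous of degree `2k - |β|` and vanishes when
`|β| > 2k`, so it is bounded by the sum of its coefficients times `|x|^{2k - |β|}`; this
constant does not see `a` or `b`. With `θ = |β| / 2k` and `σ = 1 + b|x|^{2k} + a|ξ|^{2ℓ}`,
`b |x|^{2k - |β|} = b^θ (b |x|^{2k})^{1 - θ} ≤ max(b, 1) σ^{1 - θ}`.
-/

open MvPolynomial

/-- The mixed multi-index partial derivative `∂_x^β ∂_ξ^α` acting on polynomials in the
variables `(x, ξ) ∈ ℝⁿ × ℝⁿ`. -/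
noncomputable def multiPDeriv (n : ℕ) (β α : Fin n → ℕ) :
    Module.End ℝ (MvPolynomial (Fin n ⊕ Fin n) ℝ) :=
  (List.ofFn fun i : Fin n =>
      ((pderiv (R := ℝ) (Sum.inl i : Fin n ⊕ Fin n)).toLinearMap ^ β i)).prod *
  (List.ofFn fun i : Fin n =>
      ((pderiv (R := ℝ) (Sum.inr i : Fin n ⊕ Fin n)).toLinearMap ^ α i)).prod

namespace Module.End

variable {R M N : Type*} [CommSemiring R] [AddCommMonoid M] [Module R M]
  [AddCommMonoid N] [Module R N]

theorem list_prod_ofFn_pow_apply_eq_zero {n : ℕ} {A : Fin n → Module.End R M}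
    {γ : Fin n → ℕ} (hγ : γ ≠ 0) {m : M} (hm : ∀ i, A i m = 0) :
    (List.ofFn fun i => A i ^ γ i).prod m = 0 := by
  induction n with
  | zero => exact absurd (funext finZeroElim) hγ
  | succ n ih =>
    rw [List.ofFn_succ, List.prod_cons, mul_apply]
    by_cases htail : (fun i : Fin n => γ i.succ) = 0
    · have htail' : ∀ i : Fin n, γ i.succ = 0 := congrFun htail
      obtain ⟨j, hj⟩ := Nat.exists_eq_succ_of_ne_zero fun h0 => hγ (funext (Fin.cases h0 htail'))
      simp [htail', hj, pow_succ, hm 0, List.ofFn_const]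
    · rw [ih htail (fun i => hm i.succ), map_zero]

theorem list_prod_ofFn_pow_comp_of_commute {n : ℕ} {A : Fin n → Module.End R M}
    {B : Fin n → Module.End R N} {g : M →ₗ[R] N} (h : ∀ i, (B i).comp g = g.comp (A i))
    (γ : Fin n → ℕ) :
    (List.ofFn fun i => B i ^ γ i).prod.comp g = g.comp (List.ofFn fun i => A i ^ γ i).prod := by
  induction n with
  | zero => simp [one_eq_id]
  | succ n ih =>
    rw [List.ofFn_succ, List.ofFn_succ, List.prod_cons, List.prod_cons, mul_eq_comp,
      mul_eq_comp, LinearMap.comp_assoc, ih (fun i => h i.succ), ← LinearMap.comp_assoc,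
      commute_pow_left_of_commute (h 0), LinearMap.comp_assoc]

end Module.End

namespace MvPolynomial

variable {R σ τ : Type*} [CommSemiring R] {n : ℕ}

noncomputable def iteratedPDeriv (s : Fin n → σ) (γ : Fin n → ℕ) :
    Module.End R (MvPolynomial σ R) :=
  (List.ofFn fun i => (pderiv (s i)).toLinearMap ^ γ i).prod

@[simp]
theorem iteratedPDeriv_zero (s : Fin n → σ) :
    iteratedPDeriv (R := R) s 0 = 1 := by
  simp [iteratedPDeriv, List.ofFn_const]

theorem iteratedPDeriv_rename {f : σ → τ} (hf : Function.Injective f) (s : Fin n → σ)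
    (γ : Fin n → ℕ) (p : MvPolynomial σ R) :
    iteratedPDeriv (f ∘ s) γ (rename f p) = rename f (iteratedPDeriv s γ p) :=
  LinearMap.congr_fun (Module.End.list_prod_ofFn_pow_comp_of_commute
    (g := (rename f).toLinearMap) (fun i => LinearMap.ext (pderiv_rename hf (s i))) γ) p

theorem pderiv_rename_of_forall_ne {f : σ → τ} {j : τ}
    (hj : ∀ i, f i ≠ j) (p : MvPolynomial σ R) : pderiv j (rename f p) = 0 := by
  classical
  exact pderiv_eq_zero_of_notMem_vars fun h => by
    obtain ⟨i, -, hi⟩ := mem_vars_rename f p h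
    exact hj i hi

theorem iteratedPDeriv_rename_of_forall_ne {f : σ → τ}
    {s : Fin n → τ} (hs : ∀ i j, f i ≠ s j) (γ : Fin n → ℕ) (p : MvPolynomial σ R) :
    iteratedPDeriv s γ (rename f p) = if γ = 0 then rename f p else 0 := by
  split_ifs with hγ
  · simp [hγ]
  · exact Module.End.list_prod_ofFn_pow_apply_eq_zero hγ fun j =>
      pderiv_rename_of_forall_ne (hs · j) p

/-- Since `d - w` is truncated, the second clause is what records that `f` annihilates
homogeneous polynomials of degree below `w`. -/
def LowersDegreeBy (f : Module.End R (MvPolynomial σ R)) (w : ℕ) : Prop :=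
  ∀ ⦃p : MvPolynomial σ R⦄ ⦃d : ℕ⦄, p.IsHomogeneous d →
    (f p).IsHomogeneous (d - w) ∧ (d < w → f p = 0)

namespace LowersDegreeBy

theorem one : LowersDegreeBy (1 : Module.End R (MvPolynomial σ R)) 0 :=
  fun _ d hp => ⟨hp, fun h => absurd h (Nat.not_lt_zero d)⟩

theorem mul {f g : Module.End R (MvPolynomial σ R)} {v w : ℕ} (hf : LowersDegreeBy f v)
    (hg : LowersDegreeBy g w) : LowersDegreeBy (f * g) (w + v) := by
  intro p d hp
  obtain ⟨hgp, hgp0⟩ := hg hp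
  obtain ⟨hfgp, hfgp0⟩ := hf hgp
  refine ⟨by rwa [Nat.sub_add_eq], fun hd => ?_⟩
  rw [Module.End.mul_apply]
  by_cases hdw : d < w
  · rw [hgp0 hdw, map_zero]
  · exact hfgp0 (by omega)

theorem pow {f : Module.End R (MvPolynomial σ R)} {w : ℕ} (hf : LowersDegreeBy f w) (m : ℕ) :
    LowersDegreeBy (f ^ m) (m * w) := by
  induction m with
  | zero => simpa using one
  | succ m ih => simpa [pow_succ, add_mul, add_comm] using ih.mul hf

theorem list_prod_ofFn {A : Fin n → Module.End R (MvPolynomial σ R)} {w : Fin n → ℕ}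
    (hA : ∀ i, LowersDegreeBy (A i) (w i)) :
    LowersDegreeBy (List.ofFn A).prod (∑ i, w i) := by
  induction n with
  | zero => simpa using one
  | succ n ih =>
    simpa [List.ofFn_succ, Fin.sum_univ_succ, add_comm] using (hA 0).mul (ih fun i => hA i.succ)

end LowersDegreeBy

theorem lowersDegreeBy_pderiv (i : σ) :
    LowersDegreeBy (pderiv (R := R) i).toLinearMap 1 := by
  intro p d hp
  refine ⟨hp.pderiv, fun hd => ?_⟩
  obtain rfl : d = 0 := by omega
  rw [← totalDegree_zero_iff_isHomogeneous, totalDegree_eq_zero_iff_eq_C] at hp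
  rw [hp]
  exact pderiv_C

theorem lowersDegreeBy_iteratedPDeriv (s : Fin n → σ) (γ : Fin n → ℕ) :
    LowersDegreeBy (iteratedPDeriv (R := R) s γ) (∑ i, γ i) := by
  simpa [iteratedPDeriv] using
    LowersDegreeBy.list_prod_ofFn fun i => (lowersDegreeBy_pderiv (s i)).pow (γ i)

theorem IsHomogeneous.abs_eval_le {ι : Type*} [Fintype ι] {p : MvPolynomial ι ℝ} {d : ℕ}
    (hp : p.IsHomogeneous d) {x : ι → ℝ} {r : ℝ} (hx : ∀ i, |x i| ≤ r) :
    |eval x p| ≤ (∑ m ∈ p.support, |coeff m p|) * r ^ d := by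
  rw [eval_eq', Finset.sum_mul]
  refine (Finset.abs_sum_le_sum_abs _ _).trans (Finset.sum_le_sum fun m hm => ?_)
  rw [abs_mul, Finset.abs_prod]
  gcongr
  calc ∏ i, |x i ^ m i| = ∏ i, |x i| ^ m i := by simp only [abs_pow]
    _ ≤ ∏ i, r ^ m i :=
        Finset.prod_le_prod (fun i _ => by positivity)
          fun i _ => pow_le_pow_left₀ (abs_nonneg _) (hx i) _
    _ = r ^ d := by
        rw [Finset.prod_pow_eq_pow_sum, ← Finsupp.degree_eq_sum, Finsupp.degree_apply,
          ← hp.degree_eq_sum_deg_support hm]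

end MvPolynomial

theorem mul_pow_sub_le_max_mul_rpow {b r s : ℝ} {m B : ℕ} (hb : 0 < b) (hr : 0 ≤ r)
    (hB : B ≤ m) (hs : b * r ^ m ≤ s) :
    b * r ^ (m - B) ≤ max b 1 * s ^ (1 - (B : ℝ) / m) := by
  set θ : ℝ := B / m
  have hθ0 : 0 ≤ θ := by positivity
  have hθ1 : θ ≤ 1 := div_le_one_of_le₀ (by exact_mod_cast hB) (Nat.cast_nonneg m)
  have hpow : (r ^ (m - B) : ℝ) = (r ^ m) ^ (1 - θ) := by
    have hexp : ((m - B : ℕ) : ℝ) = m * (1 - θ) := by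
      rw [Nat.cast_sub hB, mul_sub, mul_one,
        mul_div_cancel_of_imp' fun h => by simp only [Nat.cast_eq_zero] at h ⊢; omega]
    rw [← Real.rpow_natCast, hexp, Real.rpow_mul hr, Real.rpow_natCast]
  have hbθ : b ^ θ ≤ max b 1 :=
    (Real.rpow_le_rpow hb.le (le_max_left b 1) hθ0).trans
      (by simpa using Real.rpow_le_rpow_of_exponent_le (le_max_right b 1) hθ1)
  calc b * r ^ (m - B) = b ^ θ * (b * r ^ m) ^ (1 - θ) := by
        rw [hpow, Real.mul_rpow hb.le (pow_nonneg hr m), ← mul_assoc, ← Real.rpow_add hb,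
          add_sub_cancel, Real.rpow_one]
    _ ≤ max b 1 * s ^ (1 - θ) := by gcongr

theorem exists_bound_iteratedPDeriv_sum_sq_pow {n : ℕ} (k : ℕ) (γ : Fin n → ℕ) :
    ∃ C > (0 : ℝ), ∀ b > (0 : ℝ), ∀ (x : Fin n → ℝ) (s : ℝ), b * (∑ i, x i ^ 2) ^ k ≤ s →
      |b * eval x (iteratedPDeriv id γ ((∑ i, X i ^ 2) ^ k))|
        ≤ C * max b 1 * s ^ (1 - (∑ i, (γ i : ℝ)) / (2 * k)) := by
  set P : MvPolynomial (Fin n) ℝ := (∑ i, X i ^ 2) ^ k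
  have hP : P.IsHomogeneous (2 * k) :=
    (IsHomogeneous.sum _ _ _ fun i _ => isHomogeneous_X_pow i 2).pow k
  obtain ⟨hhom, hzero⟩ := lowersDegreeBy_iteratedPDeriv id γ hP
  set D := iteratedPDeriv id γ P
  set S := ∑ m ∈ D.support, |coeff m D|
  refine ⟨S + 1, by positivity, fun b hb x s hs => ?_⟩
  rw [abs_mul, abs_of_pos hb]
  have hs0 : 0 ≤ s := le_trans (by positivity) hs
  rcases le_or_gt (∑ i, γ i) (2 * k) with hγ | hγ
  · set r := √(∑ i, x i ^ 2)
    have hx : ∀ i, |x i| ≤ r := fun i =>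
      Real.abs_le_sqrt (Finset.single_le_sum (fun j _ => sq_nonneg (x j)) (Finset.mem_univ i))
    have hrs : b * r ^ (2 * k) ≤ s := by
      rwa [pow_mul, Real.sq_sqrt (by positivity)]
    calc b * |eval x D| ≤ b * (S * r ^ (2 * k - ∑ i, γ i)) := by
          gcongr
          exact hhom.abs_eval_le hx
      _ = S * (b * r ^ (2 * k - ∑ i, γ i)) := by ring
      _ ≤ (S + 1) * (max b 1 * s ^ (1 - ((∑ i, γ i : ℕ) : ℝ) / (2 * k : ℕ))) := by
          refine mul_le_mul (by linarith) ?_ (by positivity) (by positivity)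
          exact mul_pow_sub_le_max_mul_rpow hb (Real.sqrt_nonneg _) hγ hrs
      _ = _ := by push_cast; ring
  · rw [hzero hγ, map_zero, abs_zero, mul_zero]
    positivity

theorem multiPDeriv_eq_mul (n : ℕ) (β α : Fin n → ℕ) :
    multiPDeriv n β α = iteratedPDeriv Sum.inl β * iteratedPDeriv Sum.inr α :=
  rfl

theorem eval_multiPDeriv_symbol {n : ℕ} (k ℓ : ℕ) (β α : Fin n → ℕ) (a b : ℝ)
    (x ξ : Fin n → ℝ) :
    eval (Sum.elim x ξ) (multiPDeriv n β α
        (C b * (∑ i : Fin n, X (Sum.inl i : Fin n ⊕ Fin n) ^ 2) ^ k +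
          C a * (∑ i : Fin n, X (Sum.inr i : Fin n ⊕ Fin n) ^ 2) ^ ℓ)) =
      (if α = 0 then b * eval x (iteratedPDeriv id β ((∑ i, X i ^ 2) ^ k)) else 0) +
        if β = 0 then a * eval ξ (iteratedPDeriv id α ((∑ i, X i ^ 2) ^ ℓ)) else 0 := by
  have hsymbol : C b * (∑ i : Fin n, X (Sum.inl i : Fin n ⊕ Fin n) ^ 2) ^ k +
        C a * (∑ i : Fin n, X (Sum.inr i : Fin n ⊕ Fin n) ^ 2) ^ ℓ =
      b • rename Sum.inl ((∑ i : Fin n, X i ^ 2) ^ k) +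
        a • rename Sum.inr ((∑ i : Fin n, X i ^ 2) ^ ℓ) := by
    simp [smul_eq_C_mul]
  have hinl := iteratedPDeriv_rename (R := ℝ) (Sum.inl_injective (β := Fin n)) id β
    ((∑ i, X i ^ 2) ^ k)
  have hinr := iteratedPDeriv_rename (R := ℝ) (Sum.inr_injective (α := Fin n)) id α
    ((∑ i, X i ^ 2) ^ ℓ)
  rw [Function.comp_id] at hinl hinr
  rw [multiPDeriv_eq_mul, hsymbol, map_add, map_smul, map_smul, Module.End.mul_apply,
    Module.End.mul_apply, iteratedPDeriv_rename_of_forall_ne (fun _ _ => Sum.inl_ne_inr), hinr,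
    iteratedPDeriv_rename_of_forall_ne (fun _ _ => Sum.inr_ne_inl)]
  split_ifs <;> simp only [hinl, map_add, map_zero, smul_zero, smul_eval, eval_rename,
    Sum.elim_comp_inl, Sum.elim_comp_inr, add_zero, zero_add]

theorem anharmonic_symbol_class_ab_general (n k ℓ : ℕ) (β α : Fin n → ℕ) :
    ∃ C > (0 : ℝ), ∀ a b : ℝ, 0 < a → 0 < b → ∀ x ξ : Fin n → ℝ,
      |eval (Sum.elim x ξ)
          (multiPDeriv n β α
            (MvPolynomial.C b * (∑ i : Fin n, X (Sum.inl i : Fin n ⊕ Fin n) ^ 2) ^ k +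
              MvPolynomial.C a * (∑ i : Fin n, X (Sum.inr i : Fin n ⊕ Fin n) ^ 2) ^ ℓ))|
        ≤ C * max (max a b) 1 *
            (1 + b * (∑ i, x i ^ 2) ^ k + a * (∑ i, ξ i ^ 2) ^ ℓ) ^
            ((1 : ℝ) - (∑ i, β i : ℝ) / (2 * (k : ℝ)) - (∑ i, α i : ℝ) / (2 * (ℓ : ℝ))) := by
  obtain ⟨C₁, hC₁, hx⟩ := exists_bound_iteratedPDeriv_sum_sq_pow k β
  obtain ⟨C₂, hC₂, hξ⟩ := exists_bound_iteratedPDeriv_sum_sq_pow ℓ α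
  refine ⟨C₁ + C₂, by positivity, fun a b ha hb x ξ => ?_⟩
  set s := 1 + b * (∑ i, x i ^ 2) ^ k + a * (∑ i, ξ i ^ 2) ^ ℓ
  have hx₀ : 0 ≤ b * (∑ i, x i ^ 2) ^ k := by positivity
  have hξ₀ : 0 ≤ a * (∑ i, ξ i ^ 2) ^ ℓ := by positivity
  have hs : 0 ≤ s := by linarith
  rw [eval_multiPDeriv_symbol, add_mul, add_mul]
  refine (abs_add_le _ _).trans (add_le_add ?_ ?_)
  · split_ifs with hα
    · subst hα
      refine (hx b hb x s (by linarith)).trans ?_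
      simp only [Pi.zero_apply, CharP.cast_eq_zero, Finset.sum_const_zero, zero_div, sub_zero]
      gcongr
      exact le_max_right a b
    · rw [abs_zero]
      positivity
  · split_ifs with hβ
    · subst hβ
      refine (hξ a ha ξ s (by linarith)).trans ?_
      simp only [Pi.zero_apply, CharP.cast_eq_zero, Finset.sum_const_zero, zero_div, sub_zero]
      gcongr
      exact le_max_left a b
    · rw [abs_zero]
      positivity

/-- Stage 2: uniform symbol estimates for `σ_{ab}(x,ξ) = b|x|^(2k) + a|ξ|^(2ℓ)` with
structural constants independent of `a, b`. -/
theorem anharmonic_symbol_class_ab (n k ℓ : ℕ) (hn : 1 ≤ n) (hk : 1 ≤ k) (hl : 1 ≤ ℓ)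
    (β α : Fin n → ℕ) :
    ∃ C > (0 : ℝ), ∀ a b : ℝ, 0 < a → 0 < b → ∀ x ξ : Fin n → ℝ,
      |eval (Sum.elim x ξ)
          (multiPDeriv n β α
            (MvPolynomial.C b * (∑ i : Fin n, X (Sum.inl i : Fin n ⊕ Fin n) ^ 2) ^ k +
              MvPolynomial.C a * (∑ i : Fin n, X (Sum.inr i : Fin n ⊕ Fin n) ^ 2) ^ ℓ))|
        ≤ C * max (max a b) 1 *
            (1 + b * (∑ i, x i ^ 2) ^ k + a * (∑ i, ξ i ^ 2) ^ ℓ) ^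
            ((1 : ℝ) - (∑ i, β i : ℝ) / (2 * (k : ℝ)) - (∑ i, α i : ℝ) / (2 * (ℓ : ℝ))) :=
  anharmonic_symbol_class_ab_general n k ℓ β α
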